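/- arXiv:math/0404222 — 5 statements merged into one kernel-verified Lean document; each statement's English description precedes it below -/
import Mathlib

section
/- Let 𝔵 be a full λ-parameter, I' ⊆ I_𝔵, and let f be an automorphism of M_{I'}. Then there is c̄ = ⟨c_s : s ∈ I'⟩ ∈ C_{I'} such that f = f_c̄; in fact, for each s ∈ I', c_s is the unique element of 𝔾_s with f((s, e)) = (s, c_s). -/
open FirstOrder

/-- A full `λ`-parameter `𝔵` (Definition 1.1 of Shelah's paper 836). It consists of a
cardinal `λ`, an ordinal `α* ≤ λ`, a set `I` with a set `S ⊆ I × I`, sets `u_s ⊆ λ` for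
`s ∈ I`, a set `J` with a map `t ↦ s_t` to `I`, a set `T ⊆ J × J` projecting into `S`,
and, for fullness, each `t ∈ J` carries a function `g_t : u_{s_t} → α_t` (`α_t < α*`) and a
non-decreasing function `h_t : u_{s_t} → λ`, with `t` uniquely determined by
`(s_t, g_t, h_t)`.  (Functions on `u_s` are coded as total functions on ordinals, all
conditions referring only to their values on `u_s`.) -/
structure FullParam where
  lam : Cardinal.{0}
  alphaStar : Ordinal.{0}
  alphaStar_le : alphaStar ≤ lam.ord
  I : Type
  S : Set (I × I)
  u : I → Set Ordinal.{0}
  u_lt : ∀ s, ∀ γ ∈ u s, γ < lam.ord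
  J : Type
  st : J → I
  T : Set (J × J)
  T_S : ∀ p ∈ T, (st p.1, st p.2) ∈ S
  alphat : J → Ordinal.{0}
  alphat_lt : ∀ t, alphat t < alphaStar
  gt : J → Ordinal.{0} → Ordinal.{0}
  gt_lt : ∀ t, ∀ γ ∈ u (st t), gt t γ < alphat t
  ht : J → Ordinal.{0} → Ordinal.{0}
  ht_lt : ∀ t, ∀ γ ∈ u (st t), ht t γ < lam.ord
  ht_mono : ∀ t, ∀ γ₁ ∈ u (st t), ∀ γ₂ ∈ u (st t), γ₁ ≤ γ₂ → ht t γ₁ ≤ ht t γ₂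
  uniq : ∀ t₁ t₂, st t₁ = st t₂ →
    (∀ γ ∈ u (st t₁), gt t₁ γ = gt t₂ γ) →
    (∀ γ ∈ u (st t₁), ht t₁ γ = ht t₂ γ) → t₁ = t₂

namespace FullParam

variable (x : FullParam)

/-- `J_s = {t ∈ J : s_t = s}`. -/
def Js (s : x.I) : Type := {t : x.J // x.st t = s}

/-- `𝔾_s`, the free group on the generators `{x_t : t ∈ J_s}`. -/
abbrev G (s : x.I) : Type := FreeGroup (x.Js s)

/-- The universe of the model `M_𝔵`: pairs `(s, x)` with `s ∈ I`, `x ∈ 𝔾_s`. -/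
abbrev M : Type := Σ s : x.I, x.G s

/-- `𝔾_{s₁,s₂}`: the subgroup of `𝔾_{s₁} × 𝔾_{s₂}` generated by the pairs of generators
`(x_{t₁}, x_{t₂})` with `(t₁, t₂) ∈ T`, `s_{t₁} = s₁`, `s_{t₂} = s₂`. -/
def Gpair (s₁ s₂ : x.I) : Subgroup (x.G s₁ × x.G s₂) :=
  Subgroup.closure {p | ∃ (t₁ t₂ : x.J) (h₁ : x.st t₁ = s₁) (h₂ : x.st t₂ = s₂),
    (t₁, t₂) ∈ x.T ∧ p = (FreeGroup.of ⟨t₁, h₁⟩, FreeGroup.of ⟨t₂, h₂⟩)}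

/-- The union of the binary relations `Q_{s₁,s₂}` (`(s₁,s₂) ∈ S`) of `M_𝔵`:
`((s₁,x₁),(s₂,x₂)) ∈ Q` iff `(s₁,s₂) ∈ S` and `(x₁,x₂) ∈ 𝔾_{s₁,s₂}`. -/
def Q : Set (x.M × x.M) :=
  {p | (p.1.1, p.2.1) ∈ x.S ∧ (p.1.2, p.2.2) ∈ x.Gpair p.1.1 p.2.1}

open Classical in
/-- The unary function `F_{s,a}` of `M_𝔵`: `(s,y) ↦ (s, a·y)` on `P_s`, the identity off
`P_s`. -/
noncomputable def F (s : x.I) (a : x.G s) (m : x.M) : x.M :=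
  if h : m.1 = s then ⟨s, a * cast (congrArg x.G h) m.2⟩ else m

/-- An automorphism of the submodel `M_{I'}` of `M_𝔵` (coded as a bijection of `M_𝔵` which
is the identity off the universe `⋃ {P_s : s ∈ I'}` of `M_{I'}`, and on it preserves each
predicate `P_s`, each relation `Q_{s₁,s₂}`, and each function `F_{s,a}` with `s ∈ I'`). -/
structure Aut (I' : Set x.I) where
  toFun : x.M → x.M
  invFun : x.M → x.M
  left_inv : Function.LeftInverse invFun toFun
  right_inv : Function.RightInverse invFun toFun
  fix_off : ∀ m : x.M, m.1 ∉ I' → toFun m = m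
  presP : ∀ m : x.M, (toFun m).1 = m.1
  presQ : ∀ m₁ m₂ : x.M, m₁.1 ∈ I' → m₂.1 ∈ I' →
    ((m₁, m₂) ∈ x.Q ↔ (toFun m₁, toFun m₂) ∈ x.Q)
  presF : ∀ s ∈ I', ∀ (a : x.G s), ∀ m : x.M, m.1 ∈ I' →
    toFun (x.F s a m) = x.F s a (toFun m)

/-- `c̄ = ⟨c_s : s ∈ I'⟩ ∈ C_{I'}` (only the values of `c` on `I'` are relevant):
`(c_{s₁}, c_{s₂}) ∈ 𝔾_{s₁,s₂}` whenever `s₁, s₂ ∈ I'` and `(s₁,s₂) ∈ S`. -/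
def inC (I' : Set x.I) (c : ∀ s : x.I, x.G s) : Prop :=
  ∀ s₁ s₂ : x.I, s₁ ∈ I' → s₂ ∈ I' → (s₁, s₂) ∈ x.S → (c s₁, c s₂) ∈ x.Gpair s₁ s₂

open Classical in
/-- The map `f_c̄ : (s,y) ↦ (s, y·c_s)` for `s ∈ I'`, extended by the identity off the
universe of `M_{I'}`. -/
noncomputable def fc (I' : Set x.I) (c : ∀ s : x.I, x.G s) (m : x.M) : x.M :=
  if m.1 ∈ I' then ⟨m.1, m.2 * c m.1⟩ else m

/-- The vocabulary of `M_𝔵`: unary predicates `P_s` (`s ∈ I`), binary predicates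
`Q_{s₁,s₂}` (`(s₁,s₂) ∈ S`), unary function symbols `F_{s,a}` (`s ∈ I`, `a ∈ 𝔾_s`). -/
def lang : FirstOrder.Language.{0, 0} where
  Functions n := match n with
    | 1 => Σ s : x.I, x.G s
    | _ => Empty
  Relations n := match n with
    | 1 => x.I
    | 2 => ↥x.S
    | _ => Empty

/-- `M_𝔵` as a first-order structure in the vocabulary `lang 𝔵`. -/
noncomputable instance strM : x.lang.Structure x.M where
  funMap {n} f v :=
    match n, f, v with
    | 1, f, v => x.F f.1 f.2 (v 0)
    | 0, f, _ => f.elim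
    | (_ + 2), f, _ => f.elim
  RelMap {n} r v :=
    match n, r, v with
    | 1, s, v => (v 0).1 = s
    | 2, r, v => (v 0).1 = r.val.1 ∧ (v 1).1 = r.val.2 ∧ ((v 0), (v 1)) ∈ x.Q
    | 0, r, _ => r.elim
    | (_ + 3), r, _ => r.elim

end FullParam

/-- Claim 1.6(4): every automorphism `f` of `M_{I'}` is of the form `f_c̄` for some
`c̄ = ⟨c_s : s ∈ I'⟩ ∈ C_{I'}`; for each `s ∈ I'` the element `c_s` is (the unique element
of `𝔾_s`) determined by `f((s, e)) = (s, c_s)`. -/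
theorem statement3 (x : FullParam) (I' : Set x.I) (A : x.Aut I') :
    ∃ c : ∀ s : x.I, x.G s, x.inC I' c ∧
      (∀ m : x.M, m.1 ∈ I' → A.toFun m = x.fc I' c m) ∧
      (∀ s : x.I, s ∈ I' → A.toFun ⟨s, 1⟩ = ⟨s, c s⟩) := by
  classical
  have key : ∀ (m : x.M) (s : x.I) (h : m.1 = s), m = ⟨s, cast (congrArg x.G h) m.2⟩ := by
    rintro ⟨s, y⟩ s' h
    cases h
    rfl
  set c : ∀ s : x.I, x.G s :=
    fun s => cast (congrArg x.G (A.presP ⟨s, 1⟩)) (A.toFun ⟨s, 1⟩).2 with hc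
  have hunit : ∀ s : x.I, A.toFun ⟨s, 1⟩ = ⟨s, c s⟩ := fun s =>
    key (A.toFun ⟨s, 1⟩) s (A.presP ⟨s, 1⟩)
  have hF1 : ∀ (s : x.I) (y : x.G s), x.F s y ⟨s, 1⟩ = ⟨s, y⟩ := by
    intro s y
    simp [FullParam.F]
  have hFc : ∀ (s : x.I) (y z : x.G s), x.F s y ⟨s, z⟩ = ⟨s, y * z⟩ := by
    intro s y z
    simp [FullParam.F]
  have hmain : ∀ (s : x.I), s ∈ I' → ∀ y : x.G s, A.toFun ⟨s, y⟩ = ⟨s, y * c s⟩ := by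
    intro s hs y
    have h := A.presF s hs y ⟨s, 1⟩ hs
    rw [hF1, hunit, hFc] at h
    exact h
  refine ⟨c, ?_, ?_, fun s hs => hunit s⟩
  · intro s₁ s₂ h₁ h₂ hS
    have hQ := (A.presQ ⟨s₁, 1⟩ ⟨s₂, 1⟩ h₁ h₂).mp ⟨hS, Subgroup.one_mem _⟩
    rw [hunit, hunit] at hQ
    exact hQ.2
  · rintro ⟨s, y⟩ hs
    rw [hmain s hs y, FullParam.fc, if_pos hs]
end

section
/- Let 𝔵 be a full λ-parameter, let α < α*_𝔵, let γ₁ < γ₂ be ordinals with γ₂ < λ, and let g : γ₂ → α be non-decreasing such that g(γ) < g(γ₁) for every γ < γ₁. Then I_{g↾γ₁} ⊆ I_g, h_{g↾γ₁} = h_g↾γ₁, and c̄_{g↾γ₁} = c̄_g↾I_{g↾γ₁}. -/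
open FirstOrder

namespace FullParam

variable (x : FullParam)

/-- An element of `𝒢_𝔵 = ⋃{𝒢_{α,β} : α < α*_𝔵, β < λ}`: a non-decreasing function
`g : β → α` with `α < α*_𝔵`, `β < λ` (coded as a total function on ordinals; only the
values on `{γ : γ < β}` are relevant). -/
structure GFun where
  alpha : Ordinal.{0}
  beta : Ordinal.{0}
  alpha_lt : alpha < x.alphaStar
  beta_lt : beta < x.lam.ord
  g : Ordinal.{0} → Ordinal.{0}
  g_lt : ∀ γ, γ < beta → g γ < alpha
  g_mono : ∀ γ₁ γ₂, γ₁ ≤ γ₂ → γ₂ < beta → g γ₁ ≤ g γ₂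

variable {x}

/-- `h_g : β → λ`, `h_g(γ) =` the least `β' ≤ β` such that `β' = β` or `g(β') > g(γ)`. -/
noncomputable def GFun.h (G : x.GFun) (γ : Ordinal.{0}) : Ordinal.{0} :=
  sInf {β' | β' ≤ G.beta ∧ (β' = G.beta ∨ G.g γ < G.g β')}

variable (x)

/-- `t(s, g↾u_s, h↾u_s)` is well defined: there is a (necessarily unique) `t ∈ J` with
`s_t = s`, `g_t = g↾u_s` and `h_t = h↾u_s`. -/
def wellDef (s : x.I) (g h : Ordinal.{0} → Ordinal.{0}) : Prop :=
  ∃ t : x.J, x.st t = s ∧ (∀ γ ∈ x.u s, x.gt t γ = g γ) ∧ (∀ γ ∈ x.u s, x.ht t γ = h γ)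

/-- `I_g = {s ∈ I : u_s ⊆ β and t(s, g↾u_s, h_g↾u_s) is well defined}`. -/
def Ig (G : x.GFun) : Set x.I :=
  {s | (∀ γ ∈ x.u s, γ < G.beta) ∧ x.wellDef s G.g G.h}

open Classical in
/-- The family `c̄_g = ⟨c_{g,s} : s ∈ I_g⟩`, `c_{g,s} = x_{t(s, g↾u_s, h_g↾u_s)} ∈ 𝔾_s`
(extended by the identity element where `t(s, g↾u_s, h_g↾u_s)` is not well defined). -/
noncomputable def cg (G : x.GFun) (s : x.I) : x.G s :=
  if hw : x.wellDef s G.g G.h then FreeGroup.of ⟨hw.choose, hw.choose_spec.1⟩ else 1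

/-- `γ* = sup{γ + 1 : γ ∈ u_{s}}`. -/
noncomputable def gammaStar (s : x.I) : Ordinal.{0} :=
  sSup ((fun γ => γ + 1) '' x.u s)

/-- Condition `⊛_{2,α}(s(*), t*)` of Claim 1.7(2): (i) `λ` is regular and `|u_s| < λ` for
all `s`; (ii) any `g ∈ 𝒢_𝔵` whose domain includes `u_s` yields a well-defined
`t(s, g↾u_s, h_g↾u_s)`; (iii) if `t₁, t₂` project into `S` and their `g`- and `h`-parts
have a common extension of the form `(g, h_g)` with `g ∈ 𝒢_𝔵`, then `(t₁,t₂) ∈ T`;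
(iv) `t* = t(s(*), g₀, h₀)` with `g₀` constantly `0` and `h₀` constantly `γ*` on
`u_{s(*)}`. (The condition does not depend on the ordinal `α`.) -/
def Star2 (sStar : x.I) (tStar : x.J) : Prop :=
  (x.lam.IsRegular ∧ ∀ s : x.I, Cardinal.mk ↥(x.u s) < Cardinal.lift.{1} x.lam) ∧
  (∀ (s : x.I) (G : x.GFun), (∀ γ ∈ x.u s, γ < G.beta) → x.wellDef s G.g G.h) ∧
  (∀ t₁ t₂ : x.J, (x.st t₁, x.st t₂) ∈ x.S →
    (∃ G : x.GFun,
      (∀ γ ∈ x.u (x.st t₁), γ < G.beta ∧ x.gt t₁ γ = G.g γ ∧ x.ht t₁ γ = G.h γ) ∧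
      (∀ γ ∈ x.u (x.st t₂), γ < G.beta ∧ x.gt t₂ γ = G.g γ ∧ x.ht t₂ γ = G.h γ)) →
    (t₁, t₂) ∈ x.T) ∧
  (x.st tStar = sStar ∧ (∀ γ ∈ x.u sStar, x.gt tStar γ = 0) ∧
    (∀ γ ∈ x.u sStar, x.ht tStar γ = x.gammaStar sStar))

end FullParam

/-- The restriction `g ↾ γ₁` of `g ∈ 𝒢_{α,β}` to an ordinal `γ₁ < β`. -/
def FullParam.GFun.restr {x : FullParam} (G : x.GFun) (γ₁ : Ordinal.{0})
    (h : γ₁ < G.beta) : x.GFun where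
  alpha := G.alpha
  beta := γ₁
  alpha_lt := G.alpha_lt
  beta_lt := h.trans G.beta_lt
  g := G.g
  g_lt := fun γ hγ => G.g_lt γ (hγ.trans h)
  g_mono := fun a b hab hb => G.g_mono a b hab (hb.trans h)

/-- Observation 1.5R: if `g : γ₂ → α` is non-decreasing, `γ₁ < γ₂` and `g(γ) < g(γ₁)` for
all `γ < γ₁`, then `I_{g↾γ₁} ⊆ I_g`, `h_{g↾γ₁} = h_g ↾ γ₁` and
`c̄_{g↾γ₁} = c̄_g ↾ I_{g↾γ₁}`. -/
theorem statement5 (x : FullParam) (G : x.GFun) (γ₁ : Ordinal.{0}) (hlt : γ₁ < G.beta)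
    (hstrict : ∀ γ, γ < γ₁ → G.g γ < G.g γ₁) :
    x.Ig (G.restr γ₁ hlt) ⊆ x.Ig G ∧
    (∀ γ, γ < γ₁ → (G.restr γ₁ hlt).h γ = G.h γ) ∧
    (∀ s ∈ x.Ig (G.restr γ₁ hlt), x.cg (G.restr γ₁ hlt) s = x.cg G s) := by
  -- the key: h agrees below γ₁
  have hh : ∀ γ, γ < γ₁ → (G.restr γ₁ hlt).h γ = G.h γ := by
    intro γ hγ
    unfold FullParam.GFun.h
    set S₁ : Set Ordinal := {β' | β' ≤ (G.restr γ₁ hlt).beta ∧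
      (β' = (G.restr γ₁ hlt).beta ∨ (G.restr γ₁ hlt).g γ < (G.restr γ₁ hlt).g β')} with hS₁
    set S₂ : Set Ordinal := {β' | β' ≤ G.beta ∧ (β' = G.beta ∨ G.g γ < G.g β')} with hS₂
    have hg1 : (G.restr γ₁ hlt).g = G.g := rfl
    have hb1 : (G.restr γ₁ hlt).beta = γ₁ := rfl
    have hγ₁S₁ : γ₁ ∈ S₁ := ⟨le_rfl, Or.inl rfl⟩
    have hγ₁S₂ : γ₁ ∈ S₂ := ⟨hlt.le, Or.inr (hstrict γ hγ)⟩
    have hne₁ : S₁.Nonempty := ⟨γ₁, hγ₁S₁⟩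
    have hne₂ : S₂.Nonempty := ⟨γ₁, hγ₁S₂⟩
    have hm₁ : sInf S₁ ∈ S₁ := csInf_mem hne₁
    have hm₂ : sInf S₂ ∈ S₂ := csInf_mem hne₂
    have hle₁ : sInf S₁ ≤ γ₁ := csInf_le' hγ₁S₁
    have hle₂ : sInf S₂ ≤ γ₁ := csInf_le' hγ₁S₂
    apply le_antisymm
    · -- sInf S₁ ≤ sInf S₂ : show sInf S₂ ∈ S₁
      apply csInf_le'
      rcases eq_or_lt_of_le hle₂ with h | h
      · exact h ▸ hγ₁S₁
      · rcases hm₂.2 with h2 | h2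
        · exact absurd h2 (ne_of_lt (h.trans hlt))
        · exact ⟨h.le, Or.inr h2⟩
    · -- sInf S₂ ≤ sInf S₁ : show sInf S₁ ∈ S₂
      apply csInf_le'
      rcases eq_or_lt_of_le hle₁ with h | h
      · exact h ▸ hγ₁S₂
      · rcases hm₁.2 with h2 | h2
        · exact absurd h2 (ne_of_lt h)
        · exact ⟨(h.trans hlt).le, Or.inr h2⟩
  have hgeq : (G.restr γ₁ hlt).g = G.g := rfl
  -- I_{g↾γ₁} ⊆ I_g
  have hsub : x.Ig (G.restr γ₁ hlt) ⊆ x.Ig G := by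
    intro s hs
    obtain ⟨hu, t, hst, hgt, hht⟩ := hs
    refine ⟨fun γ hγ => (hu γ hγ).trans hlt, t, hst, fun γ hγ => hgt γ hγ, fun γ hγ => ?_⟩
    rw [hht γ hγ, hh γ (hu γ hγ)]
  refine ⟨hsub, hh, ?_⟩
  intro s hs
  have hw₁ : x.wellDef s (G.restr γ₁ hlt).g (G.restr γ₁ hlt).h := hs.2
  have hw₂ : x.wellDef s G.g G.h := (hsub hs).2
  unfold FullParam.cg
  rw [dif_pos hw₁, dif_pos hw₂]
  obtain ⟨hst₁, hg₁, hh₁⟩ := hw₁.choose_spec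
  obtain ⟨hst₂, hg₂, hh₂⟩ := hw₂.choose_spec
  have heq : hw₁.choose = hw₂.choose := by
    apply x.uniq
    · rw [hst₁, hst₂]
    · intro γ hγ
      rw [hst₁] at hγ
      rw [hg₁ γ hγ, hg₂ γ hγ]; rfl
    · intro γ hγ
      rw [hst₁] at hγ
      rw [hh₁ γ hγ, hh₂ γ hγ, hh γ (hs.1 γ hγ)]
  exact congrArg FreeGroup.of (Subtype.ext heq)
end

section
/- Let 𝔵 be a full λ-parameter, I' ⊆ I_𝔵 and s ∈ I'. Then the model M_{I'} is P_s-rigid if and only if there is no c̄ = ⟨c_{s'} : s' ∈ I'⟩ ∈ C_{I'} with c_s ≠ e. -/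
open FirstOrder

namespace FullParam
section Aux

variable (x : FullParam)

lemma F_apply (s : x.I) (a y : x.G s) : x.F s a ⟨s, y⟩ = ⟨s, a * y⟩ := by
  simp [FullParam.F]

lemma F_apply_ne (s : x.I) (a : x.G s) (m : x.M) (h : m.1 ≠ s) : x.F s a m = m := by
  simp [FullParam.F, h]

lemma fc_apply (I' : Set x.I) (c : ∀ s' : x.I, x.G s') (s : x.I) (hs : s ∈ I')
    (y : x.G s) : x.fc I' c ⟨s, y⟩ = ⟨s, y * c s⟩ := by
  simp [FullParam.fc, hs]

lemma fc_apply_ne (I' : Set x.I) (c : ∀ s' : x.I, x.G s') (m : x.M) (hm : m.1 ∉ I') :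
    x.fc I' c m = m := by
  simp [FullParam.fc, hm]

/-- The map `f_c̄` as an automorphism of `M_{I'}`, for `c̄ ∈ C_{I'}`. -/
noncomputable def fcAut (I' : Set x.I) (c : ∀ s' : x.I, x.G s') (hc : x.inC I' c) :
    x.Aut I' where
  toFun := x.fc I' c
  invFun := x.fc I' (fun s' => (c s')⁻¹)
  left_inv := by
    rintro ⟨s₀, y⟩
    by_cases h : s₀ ∈ I'
    · rw [x.fc_apply I' c s₀ h, x.fc_apply I' _ s₀ h, mul_assoc, mul_inv_cancel, mul_one]
    · rw [x.fc_apply_ne I' c ⟨s₀, y⟩ h, x.fc_apply_ne I' _ ⟨s₀, y⟩ h]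
  right_inv := by
    rintro ⟨s₀, y⟩
    by_cases h : s₀ ∈ I'
    · rw [x.fc_apply I' _ s₀ h, x.fc_apply I' c s₀ h, mul_assoc, inv_mul_cancel, mul_one]
    · rw [x.fc_apply_ne I' _ ⟨s₀, y⟩ h, x.fc_apply_ne I' c ⟨s₀, y⟩ h]
  fix_off := fun m hm => x.fc_apply_ne I' c m hm
  presP := by
    rintro ⟨s₀, y⟩
    by_cases h : s₀ ∈ I'
    · rw [x.fc_apply I' c s₀ h]
    · rw [x.fc_apply_ne I' c ⟨s₀, y⟩ h]
  presQ := by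
    rintro ⟨s₁, y₁⟩ ⟨s₂, y₂⟩ h₁ h₂
    rw [x.fc_apply I' c s₁ h₁, x.fc_apply I' c s₂ h₂]
    constructor
    · rintro ⟨hS, hG⟩
      refine ⟨hS, ?_⟩
      exact Subgroup.mul_mem _ hG (hc s₁ s₂ h₁ h₂ hS)
    · rintro ⟨hS, hG⟩
      refine ⟨hS, ?_⟩
      have := Subgroup.mul_mem _ hG (Subgroup.inv_mem _ (hc s₁ s₂ h₁ h₂ hS))
      simpa using this
  presF := by
    rintro s hsI a ⟨s₀, y⟩ hm
    by_cases h : s₀ = s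
    · subst h
      rw [x.F_apply, x.fc_apply I' c s₀ hm, x.fc_apply I' c s₀ hm, x.F_apply, mul_assoc]
    · rw [x.F_apply_ne s a ⟨s₀, y⟩ h, x.fc_apply I' c s₀ hm,
        x.F_apply_ne s a ⟨s₀, y * c s₀⟩ h]

/-- The family `c̄` extracted from an automorphism `A` of `M_{I'}`. -/
noncomputable def autC (I' : Set x.I) (A : x.Aut I') (s' : x.I) : x.G s' :=
  cast (congrArg x.G (A.presP ⟨s', 1⟩)) (A.toFun ⟨s', 1⟩).2

lemma autC_spec (I' : Set x.I) (A : x.Aut I') (s' : x.I) :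
    A.toFun ⟨s', 1⟩ = ⟨s', x.autC I' A s'⟩ := by
  have h := A.presP ⟨s', (1 : x.G s')⟩
  refine Sigma.ext h ?_
  exact (cast_heq _ _).symm

lemma autC_apply (I' : Set x.I) (A : x.Aut I') (s' : x.I) (hs' : s' ∈ I')
    (y : x.G s') : A.toFun ⟨s', y⟩ = ⟨s', y * x.autC I' A s'⟩ := by
  have h1 : (⟨s', y⟩ : x.M) = x.F s' y ⟨s', 1⟩ := by rw [x.F_apply, mul_one]
  rw [h1, A.presF s' hs' y ⟨s', 1⟩ hs', x.autC_spec I' A s', x.F_apply]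

lemma autC_inC (I' : Set x.I) (A : x.Aut I') : x.inC I' (x.autC I' A) := by
  intro s₁ s₂ h₁ h₂ hS
  have hQ : ((⟨s₁, 1⟩ : x.M), (⟨s₂, 1⟩ : x.M)) ∈ x.Q := ⟨hS, Subgroup.one_mem _⟩
  have := (A.presQ ⟨s₁, 1⟩ ⟨s₂, 1⟩ h₁ h₂).1 hQ
  rw [x.autC_spec I' A s₁, x.autC_spec I' A s₂] at this
  exact this.2

end Aux
end FullParam

/-- Claim 1.7(1): for a full `λ`-parameter `𝔵`, `I' ⊆ I_𝔵` and `s ∈ I'`, the model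
`M_{I'}` is `P_s`-rigid (every automorphism of `M_{I'}` is the identity on `P_s`) iff
there is no `c̄ ∈ C_{I'}` with `c_s ≠ e`. -/
theorem statement7 (x : FullParam) (I' : Set x.I) (s : x.I) (hs : s ∈ I') :
    (∀ A : x.Aut I', ∀ m : x.M, m.1 = s → A.toFun m = m) ↔
    ¬ ∃ c : ∀ s' : x.I, x.G s', x.inC I' c ∧ c s ≠ 1 := by
  constructor
  · rintro hrig ⟨c, hc, hcs⟩
    have := hrig (x.fcAut I' c hc) ⟨s, 1⟩ rfl
    have h2 : x.fc I' c ⟨s, 1⟩ = ⟨s, 1⟩ := this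
    rw [x.fc_apply I' c s hs, one_mul] at h2
    exact hcs (eq_of_heq (Sigma.mk.inj_iff.mp h2).2)
  · rintro hno A ⟨s₀, y⟩ h
    cases h
    have hcs : x.autC I' A s₀ = 1 := by
      by_contra hne
      exact hno ⟨x.autC I' A, x.autC_inC I' A, hne⟩
    rw [x.autC_apply I' A s₀ hs y, hcs, mul_one]
end

section
/- Let λ be a regular cardinal and let α be an ordinal with α < λ. Then there do not exist functions g : λ → α and h : λ → λ such that: g is non-decreasing; h is non-decreasing; h(β) > β for every β < λ; and for all β₁, β₂ < λ, g(β₁) = g(β₂) implies h(β₁) = h(β₂). -/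
/-- The combinatorial core of step `(*)₅` in the rigidity proof of Claim 1.8: if `λ` is a
regular cardinal and `α < λ` is an ordinal, then there are no functions `g : λ → α` and
`h : λ → λ` such that `g` and `h` are non-decreasing, `h(β) > β` for every `β < λ`, and
`g(β₁) = g(β₂)` implies `h(β₁) = h(β₂)`. -/
theorem statement13 (lam : Cardinal.{0}) (hreg : lam.IsRegular)
    (α : Ordinal.{0}) (hα : α < lam.ord) :
    ¬ ∃ g h : Ordinal.{0} → Ordinal.{0},
      (∀ β, β < lam.ord → g β < α) ∧
      (∀ β, β < lam.ord → h β < lam.ord) ∧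
      (∀ β₁ β₂, β₁ ≤ β₂ → β₂ < lam.ord → g β₁ ≤ g β₂) ∧
      (∀ β₁ β₂, β₁ ≤ β₂ → β₂ < lam.ord → h β₁ ≤ h β₂) ∧
      (∀ β, β < lam.ord → β < h β) ∧
      (∀ β₁ β₂, β₁ < lam.ord → β₂ < lam.ord → g β₁ = g β₂ → h β₁ = h β₂) := by
  rintro ⟨g, h, hg, hh, gmono, hmono, hlt, heq⟩
  -- Step 1: some value γ < α has an unbounded fiber.
  have key : ∃ γ, γ < α ∧ ∀ β₀, β₀ < lam.ord → ∃ β, β₀ ≤ β ∧ β < lam.ord ∧ g β = γ := by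
    by_contra hcon
    push_neg at hcon
    choose c hc1 hc2 using hcon
    have hcard : α.card < lam.ord.cof := by
      rw [hreg.cof_eq]; exact Cardinal.lt_ord.mp hα
    have hB : Ordinal.bsup α c < lam.ord :=
      Ordinal.bsup_lt_ord hcard (fun i hi => hc1 i hi)
    set B := Ordinal.bsup α c with hB_def
    have hgB : g B < α := hg B hB
    exact hc2 (g B) hgB B (Ordinal.le_bsup c (g B) hgB) hB rfl
  obtain ⟨γ, hγ, hub⟩ := key
  have h0 : (0 : Ordinal) < lam.ord := by
    rw [Cardinal.lt_ord]; simpa using hreg.pos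
  obtain ⟨β₀, -, hβ₀lt, hgβ₀⟩ := hub 0 h0
  -- g is constant (equal to γ) above β₀
  have hconst : ∀ β, β₀ ≤ β → β < lam.ord → g β = γ := by
    intro β hle hβ
    obtain ⟨β', hle', hβ', hgβ'⟩ := hub β hβ
    have h1 : g β₀ ≤ g β := gmono β₀ β hle hβ
    have h2 : g β ≤ g β' := gmono β β' hle' hβ'
    rw [hgβ₀] at h1; rw [hgβ'] at h2
    exact le_antisymm h2 h1
  -- hence h is constant above β₀; take β = max β₀ (h β₀)
  set β := max β₀ (h β₀) with hβ_def
  have hβlt : β < lam.ord := max_lt hβ₀lt (hh β₀ hβ₀lt)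
  have hgeq : g β = g β₀ := by rw [hconst β (le_max_left _ _) hβlt, hgβ₀]
  have hheq : h β = h β₀ := heq β β₀ hβlt hβ₀lt hgeq
  have : β < h β := hlt β hβlt
  rw [hheq] at this
  exact absurd (le_max_right β₀ (h β₀)) (not_le.mpr this)
end

section
/- Let P be a nonempty partially ordered set in which every countable subset of P has an upper bound in P, and let F : P → ℕ be monotone, i.e., p ≤ q implies F(p) ≤ F(q). Then F attains a maximum value; more precisely, there is p* ∈ P such that F(p) ≤ F(p*) for every p ∈ P, and F(p) = F(p*) for every p ∈ P with p* ≤ p. -/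
/-- The stabilization step in the proof of Claim 1.8: if `P` is a nonempty partial order in
which every countable subset has an upper bound, and `F : P → ℕ` is monotone, then `F`
attains a maximum value at some `p*`, and `F` is constant on `{p : p* ≤ p}`. -/
theorem statement14 {P : Type*} [PartialOrder P] [Nonempty P]
    (hdir : ∀ c : Set P, c.Countable → ∃ ub : P, ∀ p ∈ c, p ≤ ub)
    (F : P → ℕ) (hF : Monotone F) :
    ∃ pstar : P, (∀ p : P, F p ≤ F pstar) ∧ ∀ p : P, pstar ≤ p → F p = F pstar := by
  have hbdd : ∃ N, ∀ p, F p ≤ N := by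
    by_contra h
    push_neg at h
    choose f hf using h
    obtain ⟨ub, hub⟩ := hdir (Set.range f) (Set.countable_range f)
    have : ∀ n, n < F ub := fun n =>
      lt_of_lt_of_le (hf n) (hF (hub _ (Set.mem_range_self n)))
    exact lt_irrefl _ (this (F ub))
  obtain ⟨N, hN⟩ := hbdd
  -- the set of values of F is nonempty and bounded, take its max
  have hne : (Set.range F).Nonempty := Set.range_nonempty F
  obtain ⟨m, ⟨pstar, hp⟩, hmax⟩ :=
    Set.exists_max_image (Set.range F) id ((Set.finite_Iic N).subset
      (fun x ⟨p, hp⟩ => by simpa [← hp] using hN p)) hne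
  refine ⟨pstar, fun p => ?_, fun p hle => ?_⟩
  · simpa [hp] using hmax (F p) (Set.mem_range_self p)
  · exact le_antisymm (by simpa [hp] using hmax (F p) (Set.mem_range_self p)) (hF hle)
end
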